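/- arXiv:2212.12930 — 2 statements merged into one kernel-verified Lean document; each statement's English description precedes it below -/
import Mathlib

section
/- Let N be a random variable with the Poisson–gamma distribution PG(t, α, β) (α > 0, β > 0, t ≥ 0) and let L ≥ 1 be a natural number (the enrollment cap). Then the mean of the capped variable min(N, L) satisfies Σ_{k=0}^{∞} min(k, L) · p(k; t, α, β) = (αt/β) · Σ_{k=0}^{L-2} p(k; t, α+1, β) + L · (1 − Σ_{k=0}^{L-1} p(k; t, α, β)), where a sum over an empty range equals 0. -/
open Real Finset MeasureTheory Set

/-- Poisson–gamma probability mass function `p(k; t, α, β)`. -/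
noncomputable def pgPMF (t α β : ℝ) (k : ℕ) : ℝ :=
  Real.Gamma (α + k) / (Nat.factorial k * Real.Gamma α) *
    (t ^ k * β ^ α / (β + t) ^ (α + (k : ℝ)))

/-- summability of the negative-binomial-type series -/
lemma negbin_summable {α x : ℝ} (hα : 0 < α) (hx0 : 0 ≤ x) (hx1 : x < 1) :
    Summable (fun k : ℕ => Real.Gamma (α + k) / (Nat.factorial k) * x ^ k) := by
  rcases eq_or_lt_of_le hx0 with h0 | hxpos
  · apply summable_of_ne_finset_zero (s := {0})
    intro k hk
    simp only [Finset.mem_singleton] at hk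
    rw [← h0, zero_pow hk, mul_zero]
  · have hpos : ∀ k : ℕ, 0 < Real.Gamma (α + k) / (Nat.factorial k) * x ^ k := by
      intro k
      have h1 : (0:ℝ) < α + k := by positivity
      have := Real.Gamma_pos_of_pos h1
      positivity
    apply summable_of_ratio_test_tendsto_lt_one hx1
    · exact Filter.Eventually.of_forall fun k => (hpos k).ne'
    · have key : ∀ k : ℕ, ‖Real.Gamma (α + ((k+1:ℕ):ℝ)) / (Nat.factorial (k+1)) * x ^ (k+1)‖ /
          ‖Real.Gamma (α + k) / (Nat.factorial k) * x ^ k‖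
          = (1 + (α - 1) * (1 / (k+1))) * x := by
        intro k
        have h1 : (0:ℝ) < α + k := by positivity
        have hG := Real.Gamma_pos_of_pos h1
        have hrec : Real.Gamma (α + (k+1:ℕ)) = (α + k) * Real.Gamma (α + k) := by
          have : α + ((k:ℝ)+1) = (α + k) + 1 := by ring
          push_cast
          rw [this, Real.Gamma_add_one (by positivity)]
        rw [norm_of_nonneg (hpos _).le, norm_of_nonneg (hpos _).le, hrec]
        have hk1 : ((k:ℝ)+1) ≠ 0 := by positivity
        have hfact : (Nat.factorial (k+1) : ℝ) = (k+1) * Nat.factorial k := by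
          push_cast [Nat.factorial_succ]; ring
        push_cast
        rw [hfact]
        have hfk : (0:ℝ) < Nat.factorial k := by positivity
        field_simp
        ring
      simp only [key]
      have := tendsto_one_div_add_atTop_nhds_zero_nat (𝕜 := ℝ)
      have h2 : Filter.Tendsto (fun k : ℕ => (1 + (α - 1) * (1 / (k+1))) * x)
          Filter.atTop (nhds ((1 + (α-1) * 0) * x)) := by
        apply Filter.Tendsto.mul _ tendsto_const_nhds
        exact (tendsto_const_nhds.add (tendsto_const_nhds.mul this))
      simpa using h2

lemma negbin_tsum {α x : ℝ} (hα : 0 < α) (hx0 : 0 ≤ x) (hx1 : x < 1) :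
    ∑' k : ℕ, Real.Gamma (α + k) / (Nat.factorial k) * x ^ k
      = (1 - x) ^ (-α) * Real.Gamma α := by
  have h1x : 0 < 1 - x := by linarith
  set μ := volume.restrict (Ioi (0:ℝ)) with hμ
  set F : ℕ → ℝ → ℝ := fun k s => Real.exp (-s) * s ^ (α-1) * ((x*s)^k / Nat.factorial k)
    with hF
  have hcongr : ∀ k : ℕ, ∀ s ∈ Ioi (0:ℝ),
      F k s = x^k / Nat.factorial k * (Real.exp (-s) * s ^ ((α + k) - 1)) := by
    intro k s hs
    rw [Set.mem_Ioi] at hs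
    have : s ^ ((α + k) - 1) = s ^ (α - 1) * s ^ k := by
      rw [← Real.rpow_natCast s k, ← Real.rpow_add hs]
      ring_nf
    rw [this, hF]
    simp only []
    rw [mul_pow]
    ring
  have hInt : ∀ k : ℕ, Integrable (F k) μ := by
    intro k
    have h1 : (0:ℝ) < α + k := by positivity
    have := (Real.GammaIntegral_convergent h1).const_mul (x^k / Nat.factorial k)
    exact (IntegrableOn.congr_fun this (fun s hs => (hcongr k s hs).symm)
      measurableSet_Ioi : IntegrableOn _ _ _)
  have hval : ∀ k : ℕ, ∫ s, F k s ∂μ = x^k / Nat.factorial k * Real.Gamma (α + k) := by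
    intro k
    have h1 : (0:ℝ) < α + k := by positivity
    rw [hμ, setIntegral_congr_fun measurableSet_Ioi (hcongr k),
      MeasureTheory.integral_const_mul, ← Real.Gamma_eq_integral h1]
  have hnonneg : ∀ k : ℕ, 0 ≤ᵐ[μ] F k := by
    intro k
    rw [hμ]
    filter_upwards [ae_restrict_mem measurableSet_Ioi] with s hs
    rw [Set.mem_Ioi] at hs
    simp only [Pi.zero_apply]
    have h1 : 0 ≤ s ^ (α - 1) := Real.rpow_nonneg hs.le _
    have h2 : 0 ≤ (x*s)^k := pow_nonneg (by positivity) _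
    positivity
  have hsummable : Summable (fun k : ℕ => x^k / Nat.factorial k * Real.Gamma (α + k)) := by
    have := negbin_summable hα hx0 hx1
    refine this.congr fun k => ?_
    ring
  have hlin : ∀ k : ℕ, ∫⁻ s, ‖F k s‖₊ ∂μ = ENNReal.ofReal (∫ s, F k s ∂μ) := by
    intro k
    rw [MeasureTheory.ofReal_integral_eq_lintegral_ofReal (hInt k) (hnonneg k)]
    refine lintegral_congr_ae ?_
    filter_upwards [hnonneg k] with s hs
    rw [← enorm_eq_nnnorm, ← ofReal_norm, Real.norm_of_nonneg hs]
  have hne : ∑' k, ∫⁻ s, ‖F k s‖₊ ∂μ ≠ ⊤ := by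
    simp only [hlin, hval]
    rw [← ENNReal.ofReal_tsum_of_nonneg (fun k => by
      have h1 : (0:ℝ) < α + k := by positivity
      have := (Real.Gamma_pos_of_pos h1).le
      positivity) hsummable]
    exact ENNReal.ofReal_ne_top
  have hswap := MeasureTheory.integral_tsum (fun k => (hInt k).aestronglyMeasurable) hne
  -- LHS rearrangement
  have hlhs : ∑' k : ℕ, Real.Gamma (α + k) / (Nat.factorial k) * x ^ k
      = ∑' k : ℕ, ∫ s, F k s ∂μ := by
    refine tsum_congr fun k => ?_
    rw [hval]; ring
  rw [hlhs, ← hswap]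
  have hpt : ∀ s ∈ Ioi (0:ℝ), ∑' k : ℕ, F k s
      = s ^ (α - 1) * Real.exp (-((1-x) * s)) := by
    intro s hs
    rw [Set.mem_Ioi] at hs
    have hexp : ∑' k : ℕ, (x*s)^k / (Nat.factorial k : ℝ) = Real.exp (x*s) := by
      rw [Real.exp_eq_exp_ℝ]
      exact (NormedSpace.expSeries_div_hasSum_exp (x*s)).tsum_eq
    rw [hF]
    simp only []
    rw [tsum_mul_left, hexp, show -((1-x)*s) = -s + (x*s) by ring, Real.exp_add]
    ring
  rw [hμ, setIntegral_congr_fun measurableSet_Ioi hpt,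
    Real.integral_rpow_mul_exp_neg_mul_Ioi hα h1x, one_div,
    ← Real.rpow_neg_one (1-x), ← Real.rpow_mul h1x.le]
  norm_num

lemma pgPMF_eq (t α β : ℝ) (hβ : 0 < β) (ht : 0 ≤ t) (k : ℕ) :
    pgPMF t α β k = (β ^ α / (β + t) ^ α / Real.Gamma α) *
      (Real.Gamma (α + k) / (Nat.factorial k) * (t / (β + t)) ^ k) := by
  have hbt : 0 < β + t := by linarith
  have h1 : (β + t) ^ (α + (k:ℝ)) = (β + t) ^ α * (β + t) ^ k := by
    rw [Real.rpow_add hbt, Real.rpow_natCast]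
  rw [pgPMF, h1, div_pow]
  have h2 : ((β + t):ℝ) ^ k ≠ 0 := by positivity
  have h3 : ((β + t):ℝ) ^ α ≠ 0 := by positivity
  field_simp

lemma pgPMF_summable (α β t : ℝ) (hα : 0 < α) (hβ : 0 < β) (ht : 0 ≤ t) :
    Summable (pgPMF t α β) := by
  have hbt : 0 < β + t := by linarith
  have hx0 : 0 ≤ t / (β + t) := by positivity
  have hx1 : t / (β + t) < 1 := by
    rw [div_lt_one hbt]; linarith
  have := (negbin_summable hα hx0 hx1).mul_left (β ^ α / (β + t) ^ α / Real.Gamma α)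
  exact this.congr fun k => (pgPMF_eq t α β hβ ht k).symm

lemma pgPMF_tsum (α β t : ℝ) (hα : 0 < α) (hβ : 0 < β) (ht : 0 ≤ t) :
    ∑' k : ℕ, pgPMF t α β k = 1 := by
  have hbt : 0 < β + t := by linarith
  have hx0 : 0 ≤ t / (β + t) := by positivity
  have hx1 : t / (β + t) < 1 := by
    rw [div_lt_one hbt]; linarith
  have h1x : 1 - t / (β + t) = β / (β + t) := by
    field_simp
    ring
  calc ∑' k : ℕ, pgPMF t α β k
      = (β ^ α / (β + t) ^ α / Real.Gamma α) *
        ∑' k : ℕ, (Real.Gamma (α + k) / (Nat.factorial k) * (t / (β + t)) ^ k) := by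
        rw [← tsum_mul_left]
        exact tsum_congr fun k => pgPMF_eq t α β hβ ht k
    _ = 1 := by
        rw [negbin_tsum hα hx0 hx1, h1x,
          Real.rpow_neg (by positivity), Real.div_rpow hβ.le hbt.le]
        have hG := Real.Gamma_pos_of_pos hα
        have h3 : (β:ℝ) ^ α ≠ 0 := by positivity
        have h4 : ((β + t):ℝ) ^ α ≠ 0 := by positivity
        field_simp

lemma pgPMF_nonneg (α β t : ℝ) (hα : 0 < α) (hβ : 0 < β) (ht : 0 ≤ t) (k : ℕ) :
    0 ≤ pgPMF t α β k := by
  have hbt : 0 < β + t := by linarith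
  have h1 : (0:ℝ) < α + k := by positivity
  have hG := (Real.Gamma_pos_of_pos h1).le
  have hG2 := (Real.Gamma_pos_of_pos hα).le
  have h2 : (0:ℝ) ≤ (β + t) ^ (α + (k:ℝ)) := Real.rpow_nonneg hbt.le _
  have h3 : (0:ℝ) ≤ β ^ α := Real.rpow_nonneg hβ.le _
  have h4 : (0:ℝ) ≤ t ^ k := pow_nonneg ht _
  rw [pgPMF]
  positivity

lemma pgPMF_rec (α β t : ℝ) (hα : 0 < α) (hβ : 0 < β) (ht : 0 ≤ t) (k : ℕ) :
    ((k:ℝ) + 1) * pgPMF t α β (k + 1) = α * t / β * pgPMF t (α + 1) β k := by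
  have hbt : 0 < β + t := by linarith
  have h1 : Real.Gamma (α + ((k+1:ℕ):ℝ)) = (α + k) * Real.Gamma (α + k) := by
    push_cast
    rw [show α + ((k:ℝ)+1) = (α + k) + 1 by ring, Real.Gamma_add_one (by positivity)]
  have h2 : Real.Gamma (α + 1 + (k:ℝ)) = (α + k) * Real.Gamma (α + k) := by
    rw [show α + 1 + (k:ℝ) = (α + k) + 1 by ring, Real.Gamma_add_one (by positivity)]
  have h3 : Real.Gamma (α + 1) = α * Real.Gamma α := Real.Gamma_add_one hα.ne'
  have h4 : (β:ℝ) ^ (α + 1) = β ^ α * β := by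
    rw [Real.rpow_add hβ, Real.rpow_one]
  have h5 : ((β + t):ℝ) ^ (α + ((k+1:ℕ):ℝ)) = (β + t) ^ (α + 1 + (k:ℝ)) := by
    push_cast; ring_nf
  have h6 : (Nat.factorial (k+1) : ℝ) = ((k:ℝ)+1) * Nat.factorial k := by
    push_cast [Nat.factorial_succ]; ring
  rw [pgPMF, pgPMF, h1, h2, h3, h4, h5, h6]
  have hG := Real.Gamma_pos_of_pos hα
  have hfk : (0:ℝ) < Nat.factorial k := by positivity
  have hp : (0:ℝ) < (β + t) ^ (α + 1 + (k:ℝ)) := Real.rpow_pos_of_pos hbt _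
  have hk1 : (0:ℝ) < (k:ℝ) + 1 := by positivity
  field_simp
  ring

/-- The mean of the enrollment process restricted by a cap `L`, i.e. of `min(N, L)`
where `N ~ PG(t, α, β)`. -/
theorem pg_capped_mean (α β t : ℝ) (hα : 0 < α) (hβ : 0 < β) (ht : 0 ≤ t)
    (L : ℕ) (hL : 1 ≤ L) :
    (∑' k : ℕ, (min k L : ℝ) * pgPMF t α β k)
      = α * t / β * (∑ k ∈ Finset.range (L - 1), pgPMF t (α + 1) β k)
        + (L : ℝ) * (1 - ∑ k ∈ Finset.range L, pgPMF t α β k) := by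
  have hsum := pgPMF_summable α β t hα hβ ht
  have hnn := pgPMF_nonneg α β t hα hβ ht
  set f : ℕ → ℝ := fun k => (min k L : ℝ) * pgPMF t α β k with hf
  have hfsum : Summable f := by
    apply Summable.of_nonneg_of_le (fun k => by
      have := hnn k
      have : (0:ℝ) ≤ (min k L : ℝ) := by positivity
      positivity) (fun k => ?_) (hsum.mul_left (L:ℝ))
    have h1 : (min k L : ℝ) ≤ L := by exact_mod_cast Nat.cast_le.mpr (min_le_right k L)
    exact mul_le_mul_of_nonneg_right h1 (hnn k)
  -- split the tsum of f
  rw [← Summable.sum_add_tsum_nat_add L hfsum]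
  have htail : ∑' k : ℕ, f (k + L) = (L:ℝ) * (1 - ∑ k ∈ Finset.range L, pgPMF t α β k) := by
    have h1 : ∀ k : ℕ, f (k + L) = (L:ℝ) * pgPMF t α β (k + L) := by
      intro k
      simp only [hf]
      rw [min_eq_right (by exact_mod_cast Nat.le_add_left L k)]
    rw [tsum_congr h1, tsum_mul_left]
    congr 1
    have := Summable.sum_add_tsum_nat_add L hsum
    rw [pgPMF_tsum α β t hα hβ ht] at this
    linarith [this]
  rw [htail]
  congr 1
  -- head sum
  have hhead : ∀ k ∈ Finset.range L, f k = (k:ℝ) * pgPMF t α β k := by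
    intro k hk
    rw [Finset.mem_range] at hk
    simp only [hf]
    rw [min_eq_left (by exact_mod_cast hk.le)]
  rw [Finset.sum_congr rfl hhead]
  obtain ⟨M, rfl⟩ : ∃ M, L = M + 1 := ⟨L - 1, (Nat.succ_pred_eq_of_pos hL).symm⟩
  rw [Finset.sum_range_succ']
  simp only [Nat.cast_zero, zero_mul, add_zero, Nat.add_sub_cancel]
  rw [Finset.mul_sum]
  refine Finset.sum_congr rfl fun k hk => ?_
  push_cast
  rw [pgPMF_rec α β t hα hβ ht k]
end

section
/- Fix real α > 0, β > 0, v > 0 and a natural number L ≥ 1. Then lim_{N → ∞} Σ_{k=0}^{L-1} p(k; v, N·α, β) = 0, where N ranges over the natural numbers. That is, for a country with N identical sites (each with Gamma(α, β) rate, all active for duration v), the probability that the country enrollment count is below any fixed cap L tends to 0 as the number of sites N tends to infinity, so the enrollment process restricted by cap L converges in probability to L. -/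
open Real Finset Filter Topology

lemma Gamma_add_nat' (x : ℝ) (hx : 0 < x) (k : ℕ) :
    Real.Gamma (x + k) = Real.Gamma x * ∏ i ∈ Finset.range k, (x + i) := by
  induction k with
  | zero => simp
  | succ n ih =>
    have h1 : x + ((n+1 : ℕ) : ℝ) = (x + n) + 1 := by push_cast; ring
    rw [h1, Real.Gamma_add_one (by positivity), ih, Finset.prod_range_succ]
    ring

lemma pg_term_tendsto (α β v : ℝ) (hα : 0 < α) (hβ : 0 < β) (hv : 0 < v) (k : ℕ) :
    Tendsto (fun N : ℕ => pgPMF v ((N : ℝ) * α) β k) atTop (𝓝 0) := by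
  set c : ℝ := (β / (β + v)) ^ α with hc
  have hbv : 0 < β + v := by positivity
  have hc0 : 0 ≤ c := by positivity
  have hc1 : c < 1 := by
    apply Real.rpow_lt_one (by positivity) _ hα
    rw [div_lt_one hbv]; linarith
  set C : ℝ := (α + k) ^ k * v ^ k / (Nat.factorial k * (β + v) ^ k) with hC
  have hlim : Tendsto (fun N : ℕ => C * ((N : ℝ) ^ k * c ^ N)) atTop (𝓝 0) := by
    have := (tendsto_pow_const_mul_const_pow_of_lt_one k hc0 hc1).const_mul C
    simpa using this
  apply squeeze_zero' ?_ ?_ hlim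
  · filter_upwards [eventually_ge_atTop 1] with N hN
    have hN1 : (1 : ℝ) ≤ (N : ℝ) := by exact_mod_cast hN
    have hx : 0 < (N : ℝ) * α := by positivity
    unfold pgPMF
    have hΓ := Real.Gamma_pos_of_pos hx
    have hΓ2 : 0 < Real.Gamma ((N : ℝ) * α + k) := Real.Gamma_pos_of_pos (by positivity)
    positivity
  · filter_upwards [eventually_ge_atTop 1] with N hN
    have hN1 : (1 : ℝ) ≤ (N : ℝ) := by exact_mod_cast hN
    have hx : 0 < (N : ℝ) * α := by positivity
    set x : ℝ := (N : ℝ) * α with hxdef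
    have hΓ : Real.Gamma x ≠ 0 := (Real.Gamma_pos_of_pos hx).ne'
    have key : pgPMF v x β k =
        (∏ i ∈ Finset.range k, (x + i)) / (Nat.factorial k) *
          (v ^ k / (β + v) ^ k) * c ^ N := by
      unfold pgPMF
      rw [Gamma_add_nat' x hx]
      have h1 : (β + v) ^ (x + (k : ℝ)) = (β + v) ^ x * (β + v) ^ k := by
        rw [Real.rpow_add hbv, Real.rpow_natCast]
      have h2 : β ^ x = c ^ N * (β + v) ^ x := by
        rw [hc, ← Real.rpow_natCast ((β / (β + v)) ^ α) N, ← Real.rpow_mul (by positivity),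
          Real.div_rpow hβ.le hbv.le]
        rw [hxdef]
        field_simp
      rw [h1, h2]
      have hbvx : (0:ℝ) < (β + v) ^ x := Real.rpow_pos_of_pos hbv x
      field_simp
    rw [key]
    have hprod : (∏ i ∈ Finset.range k, (x + i)) ≤ ((α + k) * N) ^ k := by
      calc (∏ i ∈ Finset.range k, (x + i)) ≤ ∏ _i ∈ Finset.range k, ((α + k) * N) := by
            apply Finset.prod_le_prod
            · intro i _; positivity
            · intro i hi
              have hik : (i : ℝ) ≤ (k : ℝ) := by
                exact_mod_cast (Finset.mem_range.mp hi).le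
              have : (i : ℝ) ≤ (k : ℝ) * N := by nlinarith
              rw [hxdef]; nlinarith
        _ = ((α + k) * N) ^ k := by rw [Finset.prod_const, Finset.card_range]
    have hcN : (0:ℝ) ≤ c ^ N := by positivity
    calc (∏ i ∈ Finset.range k, (x + i)) / (Nat.factorial k) *
          (v ^ k / (β + v) ^ k) * c ^ N
        ≤ ((α + k) * N) ^ k / (Nat.factorial k) * (v ^ k / (β + v) ^ k) * c ^ N := by
          gcongr
      _ = C * ((N : ℝ) ^ k * c ^ N) := by rw [hC, mul_pow]; field_simp

/-- For a country with `N` identical sites (each with `Gamma(α, β)` rate, all active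
for duration `v`), the probability that the country enrollment count is below any
fixed cap `L ≥ 1` tends to `0` as `N → ∞`. -/
theorem pg_country_cap_tendsto_zero (α β v : ℝ) (hα : 0 < α) (hβ : 0 < β) (hv : 0 < v)
    (L : ℕ) (hL : 1 ≤ L) :
    Tendsto (fun N : ℕ => ∑ k ∈ Finset.range L, pgPMF v ((N : ℝ) * α) β k)
      atTop (𝓝 0) := by
  have := tendsto_finset_sum (Finset.range L)
    (fun k _ => pg_term_tendsto α β v hα hβ hv k)
  simpa using this
end
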